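/- In the same setting, for any l' < l'': if x' is any minimizer of u(l',·), then there exists a minimizer x'' of u(l'',·) with x' ≥ x''; and conversely, if x'' is any minimizer of u(l'',·), then there exists a minimizer x' of u(l',·) with x' ≥ x''. -/
import Mathlib

open Finset

/-- A Boolean vector has coordinates 0 or 1. -/
def IsBool {V : Type} (b : V → ℝ) : Prop := ∀ i, b i = 0 ∨ b i = 1

/-- The one-level energy u(l,b) with data z. -/
noncomputable def uEn {V : Type} [Fintype V] (lam : V → ℝ) (beta : V → V → ℝ)
    (z : V → ℝ) (b : V → ℝ) : ℝ :=
  ∑ i, lam i * |z i - b i| + ∑ i, ∑ j, beta i j * |b i - b j|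

/-- b minimizes u(·) over Boolean vectors. -/
def Minimizes {V : Type} [Fintype V] (lam : V → ℝ) (beta : V → V → ℝ)
    (z : V → ℝ) (b : V → ℝ) : Prop :=
  IsBool b ∧ ∀ b' : V → ℝ, IsBool b' → uEn lam beta z b ≤ uEn lam beta z b'

lemma data_ineq (a b z1 z2 : ℝ) (h0 : 0 ≤ z2) (hz : z2 ≤ z1) (h1 : z1 ≤ 1)
    (ha : a = 0 ∨ a = 1) (hb : b = 0 ∨ b = 1) :
    |z2 - min a b| + |z1 - max a b| ≤ |z2 - a| + |z1 - b| := by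
  rcases ha with ha | ha <;> rcases hb with hb | hb <;> subst ha <;> subst hb <;> simp
  rw [abs_of_nonneg h0, abs_of_nonpos (by linarith : z1 - 1 ≤ 0),
    abs_of_nonpos (by linarith : z2 - 1 ≤ 0), abs_of_nonneg (by linarith : (0:ℝ) ≤ z1)]
  linarith

lemma edge_ineq (a b c d : ℝ) (ha : a = 0 ∨ a = 1) (hb : b = 0 ∨ b = 1)
    (hc : c = 0 ∨ c = 1) (hd : d = 0 ∨ d = 1) :
    |min a c - min b d| + |max a c - max b d| ≤ |a - b| + |c - d| := by
  rcases ha with ha | ha <;> rcases hb with hb | hb <;> rcases hc with hc | hc <;>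
    rcases hd with hd | hd <;> subst ha <;> subst hb <;> subst hc <;> subst hd <;> norm_num

lemma key_ineq {V : Type} [Fintype V] (lam : V → ℝ) (hlam : ∀ i, 0 ≤ lam i)
    (beta : V → V → ℝ) (hbeta : ∀ i j, 0 ≤ beta i j) (z1 z2 : V → ℝ)
    (hz : ∀ i, 0 ≤ z2 i ∧ z2 i ≤ z1 i ∧ z1 i ≤ 1)
    (x y : V → ℝ) (hx : IsBool x) (hy : IsBool y) :
    uEn lam beta z2 (fun i => min (x i) (y i)) + uEn lam beta z1 (fun i => max (x i) (y i)) ≤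
      uEn lam beta z2 x + uEn lam beta z1 y := by
  have hA : ∑ i, lam i * |z2 i - min (x i) (y i)| + ∑ i, lam i * |z1 i - max (x i) (y i)| ≤
      ∑ i, lam i * |z2 i - x i| + ∑ i, lam i * |z1 i - y i| := by
    rw [← Finset.sum_add_distrib, ← Finset.sum_add_distrib]
    refine Finset.sum_le_sum fun i _ => ?_
    rw [← mul_add, ← mul_add]
    exact mul_le_mul_of_nonneg_left
      (data_ineq (x i) (y i) (z1 i) (z2 i) (hz i).1 (hz i).2.1 (hz i).2.2 (hx i) (hy i))
      (hlam i)
  have hB : (∑ i, ∑ j, beta i j * |min (x i) (y i) - min (x j) (y j)|) +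
      (∑ i, ∑ j, beta i j * |max (x i) (y i) - max (x j) (y j)|) ≤
      (∑ i, ∑ j, beta i j * |x i - x j|) + (∑ i, ∑ j, beta i j * |y i - y j|) := by
    rw [← Finset.sum_add_distrib, ← Finset.sum_add_distrib]
    refine Finset.sum_le_sum fun i _ => ?_
    rw [← Finset.sum_add_distrib, ← Finset.sum_add_distrib]
    refine Finset.sum_le_sum fun j _ => ?_
    rw [← mul_add, ← mul_add]
    exact mul_le_mul_of_nonneg_left
      (edge_ineq (x i) (x j) (y i) (y j) (hx i) (hx j) (hy i) (hy j)) (hbeta i j)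
  simp only [uEn]
  linarith

lemma exists_min {V : Type} [Fintype V] (lam : V → ℝ) (beta : V → V → ℝ) (z : V → ℝ) :
    ∃ b : V → ℝ, Minimizes lam beta z b := by
  classical
  obtain ⟨f, -, hf⟩ := Finset.exists_min_image (Finset.univ : Finset (V → Bool))
    (fun f => uEn lam beta z (fun i => if f i then 1 else 0)) ⟨fun _ => false, Finset.mem_univ _⟩
  refine ⟨fun i => if f i then 1 else 0, fun i => by by_cases h : f i <;> simp [h],
    fun b' hb' => ?_⟩
  have hb : b' = fun i => if (fun i => if b' i = 1 then true else false) i then (1:ℝ) else 0 := by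
    funext i; rcases hb' i with h | h <;> simp [h]
  calc uEn lam beta z (fun i => if f i then 1 else 0) ≤ _ :=
        hf (fun i => if b' i = 1 then true else false) (Finset.mem_univ _)
    _ = uEn lam beta z b' := by rw [← hb]

/-- Any minimizer at level l' dominates some minimizer at level l'' > l', and conversely. -/
theorem stmt8 {V : Type} [Fintype V] (k : ℕ) (lam : V → ℝ) (hlam : ∀ i, 0 ≤ lam i)
    (beta : V → V → ℝ) (hbeta : ∀ i j, 0 ≤ beta i j) (z : ℕ → V → ℝ)
    (hz01 : ∀ l, 1 ≤ l → l ≤ k → ∀ i, 0 ≤ z l i ∧ z l i ≤ 1)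
    (hzmono : ∀ l l', 1 ≤ l → l ≤ l' → l' ≤ k → ∀ i, z l' i ≤ z l i)
    (l' l'' : ℕ) (h1 : 1 ≤ l') (h2 : l' < l'') (h3 : l'' ≤ k) :
    (∀ x' : V → ℝ, Minimizes lam beta (z l') x' →
      ∃ x'' : V → ℝ, Minimizes lam beta (z l'') x'' ∧ ∀ i, x'' i ≤ x' i) ∧
    (∀ x'' : V → ℝ, Minimizes lam beta (z l'') x'' →
      ∃ x' : V → ℝ, Minimizes lam beta (z l') x' ∧ ∀ i, x'' i ≤ x' i) := by
  have hz : ∀ i, 0 ≤ z l'' i ∧ z l'' i ≤ z l' i ∧ z l' i ≤ 1 := fun i =>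
    ⟨(hz01 l'' (le_trans h1 h2.le) h3 i).1, hzmono l' l'' h1 h2.le h3 i,
      (hz01 l' h1 (le_trans h2.le h3) i).2⟩
  constructor
  · intro x' hx'
    obtain ⟨x0, hx0⟩ := exists_min lam beta (z l'')
    have hmin : IsBool (fun i => min (x0 i) (x' i)) := fun i => by
      rcases hx0.1 i with h | h <;> rcases hx'.1 i with h' | h' <;> simp [h, h']
    have hmax : IsBool (fun i => max (x0 i) (x' i)) := fun i => by
      rcases hx0.1 i with h | h <;> rcases hx'.1 i with h' | h' <;> simp [h, h']
    have hk := key_ineq lam hlam beta hbeta (z l') (z l'') hz x0 x' hx0.1 hx'.1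
    have h4 := hx'.2 _ hmax
    refine ⟨fun i => min (x0 i) (x' i), ⟨hmin, fun b' hb' => ?_⟩, fun i => min_le_right _ _⟩
    have := hx0.2 b' hb'
    linarith
  · intro x'' hx''
    obtain ⟨y0, hy0⟩ := exists_min lam beta (z l')
    have hmin : IsBool (fun i => min (x'' i) (y0 i)) := fun i => by
      rcases hx''.1 i with h | h <;> rcases hy0.1 i with h' | h' <;> simp [h, h']
    have hmax : IsBool (fun i => max (x'' i) (y0 i)) := fun i => by
      rcases hx''.1 i with h | h <;> rcases hy0.1 i with h' | h' <;> simp [h, h']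
    have hk := key_ineq lam hlam beta hbeta (z l') (z l'') hz x'' y0 hx''.1 hy0.1
    have h4 := hx''.2 _ hmin
    refine ⟨fun i => max (x'' i) (y0 i), ⟨hmax, fun b' hb' => ?_⟩, fun i => le_max_left _ _⟩
    have := hy0.2 b' hb'
    linarith
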